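/- arXiv:2305.03585 — 5 statements merged into one kernel-verified Lean document; each statement's English description precedes it below -/
import Mathlib

section
/- If a graph G is the disjoint union of graphs G₁, G₂, …, G_r, then the quorum coloring number of G equals the sum of the quorum coloring numbers of the G_i. -/
open Finset SimpleGraph
open scoped Classical

/-- The closed neighborhood `N[v]` of `v` in `G`, as a finset. -/
noncomputable def closedNbhd {V : Type*} [Fintype V] (G : SimpleGraph V) (v : V) : Finset V :=
  Finset.univ.filter fun u => u = v ∨ G.Adj u v

/-- The degree of `v` in `G`. -/
noncomputable def deg {V : Type*} [Fintype V] (G : SimpleGraph V) (v : V) : ℕ :=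
  (Finset.univ.filter fun u => G.Adj v u).card

/-- A coloring `c` is a quorum coloring if every vertex has at least half of its
closed neighborhood in its own color class. -/
noncomputable def IsQuorumColoring {V : Type*} [Fintype V] (G : SimpleGraph V) (c : V → ℕ) : Prop :=
  ∀ v : V, (closedNbhd G v).card ≤ 2 * ((closedNbhd G v).filter fun u => c u = c v).card

/-- Number of color classes (distinct used colors) of a coloring. -/
noncomputable def numClasses {V : Type*} [Fintype V] (c : V → ℕ) : ℕ :=
  (Finset.univ.image c).card

/-- The quorum coloring number `ψ_q(G)`. -/
noncomputable def quorumNumber {V : Type*} [Fintype V] (G : SimpleGraph V) : ℕ :=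
  sSup {k | ∃ c : V → ℕ, IsQuorumColoring G c ∧ numClasses c = k}

/-- A coloring is cost-effective if every vertex meets the quorum bound with equality:
`|N[v] ∩ π(v)| = ⌈|N[v]|/2⌉`. -/
noncomputable def IsCostEffective {V : Type*} [Fintype V] (G : SimpleGraph V) (c : V → ℕ) : Prop :=
  ∀ v : V, ((closedNbhd G v).filter fun u => c u = c v).card = ((closedNbhd G v).card + 1) / 2

/-- The matching number of a graph: the largest number of edges in a matching. -/
noncomputable def matchingNumber {W : Type*} (H : SimpleGraph W) : ℕ :=
  sSup {k | ∃ M : H.Subgraph, M.IsMatching ∧ M.edgeSet.ncard = k}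

section Aux

lemma quorumSet_nonempty {W : Type*} [Fintype W] (G : SimpleGraph W) :
    {k | ∃ c : W → ℕ, IsQuorumColoring G c ∧ numClasses c = k}.Nonempty := by
  refine ⟨numClasses (fun _ : W => 0), fun _ => 0, ?_, rfl⟩
  intro v
  rw [Finset.filter_true_of_mem (fun _ _ => rfl)]
  omega

lemma quorumSet_bddAbove {W : Type*} [Fintype W] (G : SimpleGraph W) :
    BddAbove {k | ∃ c : W → ℕ, IsQuorumColoring G c ∧ numClasses c = k} := by
  refine ⟨Fintype.card W, ?_⟩
  rintro k ⟨c, _, rfl⟩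
  exact (Finset.card_image_le).trans (le_of_eq (Finset.card_univ))

lemma quorumNumber_mem {W : Type*} [Fintype W] (G : SimpleGraph W) :
    ∃ c : W → ℕ, IsQuorumColoring G c ∧ numClasses c = quorumNumber G :=
  Nat.sSup_mem (quorumSet_nonempty G) (quorumSet_bddAbove G)

lemma le_quorumNumber {W : Type*} [Fintype W] {G : SimpleGraph W} {c : W → ℕ}
    (h : IsQuorumColoring G c) : numClasses c ≤ quorumNumber G :=
  le_csSup (quorumSet_bddAbove G) ⟨c, h, rfl⟩

variable {r : ℕ} {V : Fin r → Type*} [∀ i, Fintype (V i)]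
  {G : ∀ i, SimpleGraph (V i)} {H : SimpleGraph (Σ i, V i)}

lemma closedNbhd_sigma (hAdj : ∀ x y : Σ i, V i, H.Adj x y ↔ ∃ h : x.1 = y.1, (G y.1).Adj (h ▸ x.2) y.2) (i : Fin r) (v : V i) :
    closedNbhd H ⟨i, v⟩ = (closedNbhd (G i) v).image (Sigma.mk i) := by
  ext ⟨j, w⟩
  simp only [closedNbhd, mem_filter, mem_univ, true_and, mem_image, hAdj, Sigma.mk.inj_iff]
  constructor
  · rintro (⟨rfl, hw⟩ | ⟨rfl, hadj⟩)
    · exact ⟨v, Or.inl rfl, rfl, (eq_of_heq hw) ▸ HEq.rfl⟩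
    · exact ⟨w, Or.inr hadj, rfl, HEq.rfl⟩
  · rintro ⟨u, hu, rfl, hw⟩
    rcases eq_of_heq hw.symm with rfl
    rcases hu with rfl | hadj
    · exact Or.inl ⟨rfl, HEq.rfl⟩
    · exact Or.inr ⟨rfl, hadj⟩

lemma card_filter_sigma (hAdj : ∀ x y : Σ i, V i, H.Adj x y ↔ ∃ h : x.1 = y.1, (G y.1).Adj (h ▸ x.2) y.2) (c : (Σ i, V i) → ℕ) (i : Fin r) (v : V i) :
    ((closedNbhd H ⟨i, v⟩).filter fun u => c u = c ⟨i, v⟩).card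
      = ((closedNbhd (G i) v).filter fun w => c ⟨i, w⟩ = c ⟨i, v⟩).card := by
  rw [closedNbhd_sigma hAdj (G := G), Finset.filter_image,
    Finset.card_image_of_injective _ sigma_mk_injective]

lemma quorum_sigma_iff (hAdj : ∀ x y : Σ i, V i, H.Adj x y ↔ ∃ h : x.1 = y.1, (G y.1).Adj (h ▸ x.2) y.2) (c : (Σ i, V i) → ℕ) :
    IsQuorumColoring H c ↔ ∀ i, IsQuorumColoring (G i) (fun v => c ⟨i, v⟩) := by
  constructor
  · intro h i v
    have := h ⟨i, v⟩
    rwa [card_filter_sigma hAdj, closedNbhd_sigma hAdj (G := G),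
      Finset.card_image_of_injective _ sigma_mk_injective] at this
  · rintro h ⟨i, v⟩
    rw [card_filter_sigma hAdj, closedNbhd_sigma hAdj (G := G),
      Finset.card_image_of_injective _ sigma_mk_injective]
    exact h i v

lemma image_sigma_eq (c : (Σ i, V i) → ℕ) :
    (Finset.univ.image c) = Finset.univ.biUnion
      (fun i : Fin r => Finset.univ.image (fun v : V i => c ⟨i, v⟩)) := by
  ext n
  simp [Sigma.exists]

end Aux

/-- the quorum coloring number of a disjoint union is the sum of the
quorum coloring numbers of the parts. -/
theorem quorumNumber_disjoint_union {r : ℕ} {V : Fin r → Type*} [∀ i, Fintype (V i)]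
    (G : ∀ i, SimpleGraph (V i)) (H : SimpleGraph (Σ i, V i))
    (hAdj : ∀ x y : Σ i, V i, H.Adj x y ↔ ∃ h : x.1 = y.1, (G y.1).Adj (h ▸ x.2) y.2) :
    quorumNumber H = ∑ i, quorumNumber (G i) := by
  apply le_antisymm
  · apply csSup_le (quorumSet_nonempty H)
    rintro k ⟨c, hc, rfl⟩
    have h1 : numClasses c ≤ ∑ i, numClasses (fun v : V i => c ⟨i, v⟩) := by
      rw [numClasses, image_sigma_eq]
      exact Finset.card_biUnion_le
    refine h1.trans (Finset.sum_le_sum fun i _ => ?_)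
    exact le_quorumNumber ((quorum_sigma_iff hAdj c).mp hc i)
  · choose c hc hnum using fun i => quorumNumber_mem (G i)
    set d : (Σ i, V i) → ℕ := fun x => Nat.pair x.1 (c x.1 x.2) with hd
    have hdq : IsQuorumColoring H d := by
      rw [quorum_sigma_iff hAdj]
      intro i v
      have := hc i v
      have heq : ((closedNbhd (G i) v).filter fun w => d ⟨i, w⟩ = d ⟨i, v⟩)
          = ((closedNbhd (G i) v).filter fun w => c i w = c i v) := by
        apply Finset.filter_congr
        intro w _
        simp [hd, Nat.pair_eq_pair]
      rw [heq]
      exact this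
    have hcard : numClasses d = ∑ i, quorumNumber (G i) := by
      rw [numClasses, image_sigma_eq]
      rw [Finset.card_biUnion]
      · refine Finset.sum_congr rfl fun i _ => ?_
        have : (Finset.univ.image fun v : V i => d ⟨i, v⟩)
            = (Finset.univ.image (c i)).image (Nat.pair i) := by
          rw [Finset.image_image]; rfl
        rw [this, Finset.card_image_of_injective _
          (fun a b hab => (Nat.pair_eq_pair.mp hab).2), ← hnum i]
        rfl
      · intro i _ j _ hij
        simp only [Finset.disjoint_left, Finset.mem_image]
        rintro n ⟨a, _, rfl⟩ ⟨b, _, hb⟩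
        exact hij (Fin.val_injective (Nat.pair_eq_pair.mp hb).1.symm)
    calc ∑ i, quorumNumber (G i) = numClasses d := hcard.symm
      _ ≤ quorumNumber H := le_quorumNumber hdq
end

section
/- In any quorum coloring of a graph G of maximum cardinality (a ψ_q-coloring), every color class induces a connected subgraph of G. -/
open Finset SimpleGraph
open scoped Classical

/-- in a `ψ_q`-coloring every color class induces a connected subgraph. -/
theorem quorum_class_connected {V : Type*} [Fintype V] (G : SimpleGraph V) (c : V → ℕ)
    (hc : IsQuorumColoring G c) (hopt : numClasses c = quorumNumber G) :
    ∀ v : V, (G.induce {u : V | c u = c v}).Connected := by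
  intro v
  by_contra hcon
  set S : Set V := {u : V | c u = c v} with hS
  have hv : v ∈ S := rfl
  -- the component of v inside its color class
  let P : V → Prop := fun u => ∃ hu : u ∈ S, (G.induce S).Reachable ⟨u, hu⟩ ⟨v, hv⟩
  have hPv : P v := ⟨hv, .refl _⟩
  have hPS : ∀ {u}, P u → c u = c v := fun h => h.1
  -- since the class is not connected, some vertex of the class is not in v's component
  obtain ⟨w, hwS, hwP⟩ : ∃ w, w ∈ S ∧ ¬ P w := by
    by_contra hall
    push_neg at hall
    apply hcon
    have hne : Nonempty (S : Set V) := ⟨⟨v, hv⟩⟩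
    refine SimpleGraph.Connected.mk fun a b => ?_
    obtain ⟨ha', ra⟩ := hall a a.2
    obtain ⟨hb', rb⟩ := hall b b.2
    exact ra.trans rb.symm
  -- key: along an edge (or equality) inside a class, membership in v's component is preserved
  have hkey1 : ∀ {u x : V}, (u = x ∨ G.Adj u x) → c u = c x → P u → P x := by
    rintro u x hadj hcx ⟨hu, ru⟩
    have hx : x ∈ S := by
      simp only [hS, Set.mem_setOf_eq] at hu ⊢
      rw [← hcx]; exact hu
    refine ⟨hx, ?_⟩
    rcases hadj with rfl | hadj
    · exact ru
    · exact (SimpleGraph.Adj.reachable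
        (show (G.induce S).Adj ⟨x, hx⟩ ⟨u, hu⟩ from hadj.symm)).trans ru
  have hkey : ∀ {u x : V}, (u = x ∨ G.Adj u x) → c u = c x → (P u ↔ P x) := by
    intro u x hadj hcx
    constructor
    · exact hkey1 hadj hcx
    · refine hkey1 ?_ hcx.symm
      rcases hadj with rfl | h
      · exact Or.inl rfl
      · exact Or.inr h.symm
  -- a fresh color
  set N : ℕ := (Finset.univ.image c).sup id + 1 with hNdef
  have hN : ∀ u, c u ≠ N := by
    intro u h
    have : c u ≤ (Finset.univ.image c).sup id :=
      Finset.le_sup (f := id) (Finset.mem_image_of_mem c (Finset.mem_univ u))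
    omega
  -- the recoloring
  set c' : V → ℕ := fun u => if P u then N else c u with hc'def
  have hc'iff : ∀ {u x : V}, (u = x ∨ G.Adj u x) → (c' u = c' x ↔ c u = c x) := by
    intro u x hadj
    by_cases hu : P u <;> by_cases hx : P x
    · simp only [hc'def, if_pos hu, if_pos hx]
      simp [hPS hu, hPS hx]
    · simp only [hc'def, if_pos hu, if_neg hx]
      exact ⟨fun h => absurd h.symm (hN x), fun h => absurd ((hkey hadj h).mp hu) hx⟩
    · simp only [hc'def, if_neg hu, if_pos hx]
      exact ⟨fun h => absurd h (hN u), fun h => absurd ((hkey hadj h).mpr hx) hu⟩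
    · simp only [hc'def, if_neg hu, if_neg hx]
  -- c' is still a quorum coloring
  have hq : IsQuorumColoring G c' := by
    intro x
    have heq : ((closedNbhd G x).filter fun u => c' u = c' x)
        = ((closedNbhd G x).filter fun u => c u = c x) := by
      apply Finset.filter_congr
      intro u hu
      simp only [closedNbhd, Finset.mem_filter, Finset.mem_univ, true_and] at hu
      exact hc'iff hu
    rw [heq]
    exact hc x
  -- c' has strictly more classes
  have hsub : insert N (Finset.univ.image c) ⊆ Finset.univ.image c' := by
    intro d hd
    rcases Finset.mem_insert.mp hd with rfl | hd
    · exact Finset.mem_image.mpr ⟨v, Finset.mem_univ v, by simp [hc'def, hPv]⟩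
    · obtain ⟨u, _, rfl⟩ := Finset.mem_image.mp hd
      by_cases hu : P u
      · refine Finset.mem_image.mpr ⟨w, Finset.mem_univ w, ?_⟩
        have hcw : c w = c u := by
          have h1 : c w = c v := hwS
          have h2 : c u = c v := hPS hu
          rw [h1, h2]
        simp [hc'def, hwP, hcw]
      · exact Finset.mem_image.mpr ⟨u, Finset.mem_univ u, by simp [hc'def, hu]⟩
  have hNnot : N ∉ Finset.univ.image c := by
    intro h
    obtain ⟨u, _, hu⟩ := Finset.mem_image.mp h
    exact hN u hu
  have hcard : numClasses c + 1 ≤ numClasses c' := by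
    have h1 := Finset.card_le_card hsub
    rw [Finset.card_insert_of_notMem hNnot] at h1
    unfold numClasses
    omega
  have hle : numClasses c' ≤ quorumNumber G := by
    apply le_csSup
    · refine ⟨Fintype.card V, fun k hk => ?_⟩
      obtain ⟨d, _, rfl⟩ := hk
      calc numClasses d = (Finset.univ.image d).card := rfl
        _ ≤ Finset.univ.card := Finset.card_image_le
        _ = Fintype.card V := Finset.card_univ
    · exact ⟨c', hq, rfl⟩
  omega
end

section
/- Let π = {V₁,…,V_k} be a quorum coloring of G of maximum cardinality (a ψ_q-coloring), fix i, and let v ∈ V_i be a vertex of maximum degree in V_i (d_G(v) = max over u ∈ V_i of d_G(u)). Then |V_i| = 1 if and only if d_G(v) ≤ 1. -/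
open Finset SimpleGraph
open scoped Classical

lemma closedNbhd_card {V : Type*} [Fintype V] (G : SimpleGraph V) (v : V) :
    (closedNbhd G v).card = deg G v + 1 := by
  classical
  have h : closedNbhd G v = insert v (Finset.univ.filter fun u => G.Adj v u) := by
    ext u
    simp only [closedNbhd, Finset.mem_filter, Finset.mem_insert, Finset.mem_univ, true_and]
    rw [G.adj_comm u v]
  rw [h, Finset.card_insert_of_notMem (by simp), deg]

lemma mem_closedNbhd_self {V : Type*} [Fintype V] (G : SimpleGraph V) (v : V) :
    v ∈ closedNbhd G v := by simp [closedNbhd]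

/-- in a `ψ_q`-coloring, a class is a singleton iff its maximum-degree
vertex has degree at most one. -/
theorem quorum_class_singleton_iff {V : Type*} [Fintype V] (G : SimpleGraph V) (c : V → ℕ)
    (hc : IsQuorumColoring G c) (hopt : numClasses c = quorumNumber G)
    (i : ℕ) (v : V) (hv : c v = i) (hmax : ∀ u : V, c u = i → deg G u ≤ deg G v) :
    (Finset.univ.filter fun u => c u = i).card = 1 ↔ deg G v ≤ 1 := by
  classical
  constructor
  · intro h1
    obtain ⟨a, ha⟩ := Finset.card_eq_one.mp h1
    have hsub : ((closedNbhd G v).filter fun u => c u = c v) ⊆ {a} := by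
      intro x hx
      have hx2 := (Finset.mem_filter.mp hx).2
      have : x ∈ Finset.univ.filter fun u => c u = i := by
        simp [hx2, hv]
      rw [ha] at this
      exact this
    have hcard : ((closedNbhd G v).filter fun u => c u = c v).card ≤ 1 := by
      have := Finset.card_le_card hsub
      simpa using this
    have := hc v
    have hcn := closedNbhd_card G v
    omega
  · intro hd
    by_contra hne
    have hvmem : v ∈ Finset.univ.filter fun u => c u = i := by simp [hv]
    have h2 : 1 < (Finset.univ.filter fun u => c u = i).card := by
      have := Finset.card_pos.mpr ⟨v, hvmem⟩
      omega
    obtain ⟨u, hu, huv⟩ := Finset.exists_mem_ne h2 v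
    have hcu : c u = i := (Finset.mem_filter.mp hu).2
    set fresh := (Finset.univ.sup c) + 1 with hfresh
    have hfresh_gt : ∀ x, c x < fresh :=
      fun x => Nat.lt_succ_of_le (Finset.le_sup (Finset.mem_univ x))
    set c' := fun x => if x = u then fresh else c x with hc'
    have hdu : deg G u ≤ 1 := le_trans (hmax u hcu) hd
    have hq : IsQuorumColoring G c' := by
      intro w
      by_cases hwu : w = u
      · subst hwu
        have h1 : w ∈ (closedNbhd G w).filter fun x => c' x = c' w :=
          Finset.mem_filter.mpr ⟨mem_closedNbhd_self G w, rfl⟩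
        have hpos : 1 ≤ ((closedNbhd G w).filter fun x => c' x = c' w).card :=
          Finset.card_pos.mpr ⟨w, h1⟩
        have hcn := closedNbhd_card G w
        omega
      · have hcw' : c' w = c w := if_neg hwu
        by_cases hmem : u ∈ closedNbhd G w
        · by_cases hcwi : c w = i
          · have hdw : deg G w ≤ 1 := le_trans (hmax w hcwi) hd
            have h1 : w ∈ (closedNbhd G w).filter fun x => c' x = c' w :=
              Finset.mem_filter.mpr ⟨mem_closedNbhd_self G w, rfl⟩
            have hpos : 1 ≤ ((closedNbhd G w).filter fun x => c' x = c' w).card :=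
              Finset.card_pos.mpr ⟨w, h1⟩
            have hcn := closedNbhd_card G w
            omega
          · have heq : ((closedNbhd G w).filter fun x => c' x = c' w) =
                ((closedNbhd G w).filter fun x => c x = c w) := by
              apply Finset.filter_congr
              intro x hx
              show c' x = c' w ↔ c x = c w
              simp only [hc']
              rw [if_neg hwu]
              by_cases hxu : x = u
              · rw [if_pos hxu]
                constructor
                · intro h
                  exact absurd h.symm (Nat.ne_of_lt (hfresh_gt w))
                · intro h
                  exfalso
                  apply hcwi
                  rw [← h, hxu, hcu]
              · rw [if_neg hxu]
            rw [heq]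
            exact hc w
        · have heq : ((closedNbhd G w).filter fun x => c' x = c' w) =
              ((closedNbhd G w).filter fun x => c x = c w) := by
            apply Finset.filter_congr
            intro x hx
            have hxu : x ≠ u := fun h => hmem (h ▸ hx)
            show c' x = c' w ↔ c x = c w
            simp only [hc']
            rw [if_neg hwu, if_neg hxu]
          rw [heq]
          exact hc w
    have himg : Finset.univ.image c' = insert fresh (Finset.univ.image c) := by
      ext y
      simp only [Finset.mem_image, Finset.mem_insert, Finset.mem_univ, true_and]
      constructor
      · rintro ⟨x, rfl⟩
        by_cases hxu : x = u
        · left; simp [hc', hxu]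
        · right; exact ⟨x, by simp [hc', hxu]⟩
      · rintro (rfl | ⟨x, rfl⟩)
        · exact ⟨u, by simp [hc']⟩
        · by_cases hxu : x = u
          · refine ⟨v, ?_⟩
            have hvu : v ≠ u := Ne.symm huv
            show c' v = c x
            simp only [hc', if_neg hvu]
            rw [hv, hxu, hcu]
          · exact ⟨x, by simp [hc', hxu]⟩
    have hnot : fresh ∉ Finset.univ.image c := by
      simp only [Finset.mem_image, Finset.mem_univ, true_and]
      rintro ⟨x, hx⟩
      have := hfresh_gt x
      omega
    have hcount : numClasses c' = numClasses c + 1 := by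
      rw [numClasses, himg, Finset.card_insert_of_notMem hnot, numClasses]
    have hbdd : BddAbove {k | ∃ c : V → ℕ, IsQuorumColoring G c ∧ numClasses c = k} := by
      refine ⟨Fintype.card V, ?_⟩
      rintro k ⟨d, -, rfl⟩
      exact le_trans Finset.card_image_le (le_of_eq Finset.card_univ)
    have hle : numClasses c' ≤ quorumNumber G := le_csSup hbdd ⟨c', hq, rfl⟩
    omega
end

section
/- Let π = {V₁,…,V_k} be a ψ_q-coloring of a graph G and fix i. Then |V_i| ≥ 2 if and only if V_i contains a vertex of degree at least 2 in G. -/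
open Finset SimpleGraph
open scoped Classical

lemma closedNbhd_card_le {V : Type*} [Fintype V] (G : SimpleGraph V) (v : V) :
    (closedNbhd G v).card ≤ 1 + deg G v := by
  classical
  have h : closedNbhd G v ⊆ {v} ∪ Finset.univ.filter (fun u => G.Adj v u) := by
    intro u hu
    simp only [closedNbhd, Finset.mem_filter, Finset.mem_univ, true_and] at hu
    rcases hu with h | h
    · simp [h]
    · simp [h.symm]
  calc (closedNbhd G v).card ≤ ({v} ∪ Finset.univ.filter (fun u => G.Adj v u)).card :=
        Finset.card_le_card h
    _ ≤ 1 + deg G v := by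
        refine (Finset.card_union_le _ _).trans ?_
        simp [deg]

lemma quorum_at_of_deg_le_one {V : Type*} [Fintype V] (G : SimpleGraph V) (c : V → ℕ) (v : V)
    (h : deg G v ≤ 1) :
    (closedNbhd G v).card ≤ 2 * ((closedNbhd G v).filter fun u => c u = c v).card := by
  have h1 : (closedNbhd G v).card ≤ 2 := (closedNbhd_card_le G v).trans (by omega)
  have h2 : 1 ≤ ((closedNbhd G v).filter fun u => c u = c v).card := by
    refine Finset.card_pos.mpr ⟨v, ?_⟩
    simp [closedNbhd]
  omega

lemma quorum_set_bdd {V : Type*} [Fintype V] (G : SimpleGraph V) :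
    BddAbove {k | ∃ c : V → ℕ, IsQuorumColoring G c ∧ numClasses c = k} := by
  refine ⟨Fintype.card V, ?_⟩
  rintro k ⟨c, _, rfl⟩
  exact (Finset.card_image_le).trans (by simp)

/-- in a `ψ_q`-coloring, a class has at least two vertices iff it
contains a vertex of degree at least two. -/
theorem quorum_class_two_iff {V : Type*} [Fintype V] (G : SimpleGraph V) (c : V → ℕ)
    (hc : IsQuorumColoring G c) (hopt : numClasses c = quorumNumber G) (i : ℕ) :
    2 ≤ (Finset.univ.filter fun u => c u = i).card ↔ ∃ v : V, c v = i ∧ 2 ≤ deg G v := by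
  constructor
  · intro h2
    by_contra hnone
    push_neg at hnone
    -- hnone : ∀ v, c v = i → deg G v < 2
    obtain ⟨u, hu, w, hw, huw⟩ := Finset.one_lt_card.mp h2
    simp only [Finset.mem_filter, Finset.mem_univ, true_and] at hu hw
    set N : ℕ := (Finset.univ.image c).sup id + 1 with hN
    have hfresh : ∀ x : V, c x ≠ N := by
      intro x hx
      have : c x ≤ (Finset.univ.image c).sup id :=
        Finset.le_sup (f := id) (Finset.mem_image_of_mem c (Finset.mem_univ x))
      omega
    set c' : V → ℕ := fun x => if x = u then N else c x with hc'
    have hq' : IsQuorumColoring G c' := by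
      intro v
      by_cases hvi : c v = i
      · exact quorum_at_of_deg_le_one G c' v (by have := hnone v hvi; omega)
      · have hvu : v ≠ u := fun h => hvi (h ▸ hu)
        have hfil : ((closedNbhd G v).filter fun x => c' x = c' v)
            = ((closedNbhd G v).filter fun x => c x = c v) := by
          apply Finset.filter_congr
          intro x _
          simp only [hc', if_neg hvu]
          by_cases hxu : x = u
          · subst hxu
            simp only [if_pos rfl]
            constructor
            · intro h; exact absurd h.symm (hfresh v)
            · intro h; exact absurd (h.symm.trans hu) hvi
          · simp [hxu]
        rw [hfil]
        exact hc v
    have himg : Finset.univ.image c' = insert N (Finset.univ.image c) := by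
      ext j
      simp only [Finset.mem_image, Finset.mem_insert, Finset.mem_univ, true_and]
      constructor
      · rintro ⟨x, rfl⟩
        by_cases hxu : x = u
        · left; simp [hc', hxu]
        · right; exact ⟨x, by simp [hc', hxu]⟩
      · rintro (rfl | ⟨x, rfl⟩)
        · exact ⟨u, by simp [hc']⟩
        · by_cases hxu : x = u
          · refine ⟨w, ?_⟩
            simp [hc', huw.symm, hw, hxu, hu]
          · exact ⟨x, by simp [hc', hxu]⟩
    have hNim : N ∉ Finset.univ.image c := by
      simp only [Finset.mem_image]
      rintro ⟨x, -, hx⟩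
      exact hfresh x hx
    have hcard : numClasses c' = numClasses c + 1 := by
      unfold numClasses
      rw [himg, Finset.card_insert_of_notMem hNim]
    have hmem : numClasses c' ∈ {k | ∃ c : V → ℕ, IsQuorumColoring G c ∧ numClasses c = k} :=
      ⟨c', hq', rfl⟩
    have := le_csSup (quorum_set_bdd G) hmem
    rw [← quorumNumber, ← hopt] at this
    omega
  · rintro ⟨v, hvi, hdeg⟩
    have h3 : 3 ≤ (closedNbhd G v).card := by
      have hsub : insert v (Finset.univ.filter fun u => G.Adj v u) ⊆ closedNbhd G v := by
        intro x hx
        simp only [Finset.mem_insert, Finset.mem_filter, Finset.mem_univ, true_and] at hx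
        simp only [closedNbhd, Finset.mem_filter, Finset.mem_univ, true_and]
        rcases hx with rfl | hx
        · exact Or.inl rfl
        · exact Or.inr hx.symm
      have hvn : v ∉ (Finset.univ.filter fun u => G.Adj v u) := by simp
      have := Finset.card_le_card hsub
      rw [Finset.card_insert_of_notMem hvn] at this
      simp only [deg] at hdeg
      omega
    have hq := hc v
    have h2 : 2 ≤ ((closedNbhd G v).filter fun u => c u = c v).card := by omega
    refine h2.trans (Finset.card_le_card ?_)
    intro x hx
    simp only [Finset.mem_filter, Finset.mem_univ, true_and] at hx ⊢
    exact hvi ▸ hx.2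
end

section
/- For every nontrivial tree T = (V,E) of order n with leaf set L, ψ_q(T) ≥ μ(T[V \ L]) + n − Σ_{v ∈ V \ L} ⌊d_T(v)/2⌋, where μ denotes the matching number and d_T(v) the degree of v in T. -/
open Finset SimpleGraph
open scoped Classical

/-!
Fix a maximum matching `M` of `T[V \ L]`. Every vertex `v` of degree `≠ 1` selects `⌊d(v)/2⌋`
of its neighbours, its `M`-partner among them, and `H` is the graph of all selections. Colouring
by the components of `H` is a quorum colouring, because `v` finds itself and its selected
neighbours in its own class. `H` has at least `n - |E(H)|` components, and
`|E(H)| ≤ Σ ⌊d(v)/2⌋ - |M|` since every edge of `M` is selected from both of its ends.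
-/

lemma Finset.card_image_add_card_le_of_one_lt_card_fiber {α β : Type*} [DecidableEq β]
    {f : α → β} {s : Finset α} {t : Finset β} (ht : ∀ b ∈ t, 1 < #{a ∈ s | f a = b}) :
    #(s.image f) + #t ≤ #s := by
  have hts : t ⊆ s.image f := fun b hb => by
    obtain ⟨a, ha⟩ := card_pos.mp (zero_lt_one.trans (ht b hb))
    exact mem_image.mpr ⟨a, (mem_filter.mp ha).1, (mem_filter.mp ha).2⟩
  have hrest : #(s.image f \ t) • 1 ≤ ∑ b ∈ s.image f \ t, #{a ∈ s | f a = b} :=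
    card_nsmul_le_sum _ _ _ fun b hb => by
      obtain ⟨a, ha, rfl⟩ := mem_image.mp (mem_sdiff.mp hb).1
      exact card_pos.mpr ⟨a, mem_filter.mpr ⟨ha, rfl⟩⟩
  have htwice : #t • 2 ≤ ∑ b ∈ t, #{a ∈ s | f a = b} := card_nsmul_le_sum _ _ _ ht
  rw [card_eq_sum_card_image f s, ← card_sdiff_add_card_eq_card hts, ← sum_sdiff hts]
  simp only [smul_eq_mul] at hrest htwice
  omega

namespace SimpleGraph

variable {V : Type*}

lemma card_le_card_connectedComponent_add_ncard_edgeSet [Finite V] (H : SimpleGraph V) :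
    Nat.card V ≤ Nat.card H.ConnectedComponent + H.edgeSet.ncard := by
  let rep : V → V := fun v => (H.connectedComponentMk v).out
  let d : V → ℕ := fun v => H.dist v (rep v)
  -- A representative is sent to its component, any other vertex to the first edge of a
  -- shortest path to its representative; `d` decreases along that edge, so this is injective.
  have hrep_adj : ∀ {v w}, H.Adj v w → rep w = rep v := fun h => by
    simp only [rep, ConnectedComponent.sound h.symm.reachable]
  have hdescent : ∀ v, rep v ≠ v → ∃ w, H.Adj v w ∧ d w < d v := by
    intro v hv
    have hreach : H.Reachable v (rep v) :=
      ConnectedComponent.exact (Quot.out_eq (H.connectedComponentMk v)).symm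
    obtain ⟨p, hp⟩ := hreach.exists_walk_length_eq_dist
    obtain ⟨w, hvw, q, rfl⟩ := Walk.exists_eq_cons_of_ne (Ne.symm hv) p
    refine ⟨w, hvw, ?_⟩
    have hq := dist_le q
    simp only [Walk.length_cons] at hp
    simp only [d, hrep_adj hvw]
    omega
  choose! next hadj hlt using hdescent
  let f : V → H.ConnectedComponent ⊕ H.edgeSet := fun v =>
    if hv : rep v = v then .inl (H.connectedComponentMk v) else .inr ⟨s(v, next v), hadj v hv⟩
  have hf : f.Injective := by
    intro x y hxy
    by_cases hx : rep x = x <;> by_cases hy : rep y = y <;> simp [f, hx, hy] at hxy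
    · rw [← hx, ← hy]
      simp only [rep, ConnectedComponent.sound hxy]
    · rcases Sym2.eq_iff.mp (Subtype.ext_iff.mp hxy) with ⟨h, -⟩ | ⟨hx_next, hy_next⟩
      · exact h
      · have hdx := hlt x hx
        have hdy := hlt y hy
        rw [hy_next] at hdx
        rw [← hx_next] at hdy
        omega
  calc Nat.card V ≤ Nat.card (H.ConnectedComponent ⊕ H.edgeSet) :=
        Nat.card_le_card_of_injective f hf
    _ = _ := by rw [Nat.card_sum, Nat.card_coe_set_eq]

section Quorum

variable [Fintype V]

lemma card_closedNbhd (G : SimpleGraph V) (v : V) : #(closedNbhd G v) = deg G v + 1 := by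
  have : closedNbhd G v = insert v (univ.filter (G.Adj v)) := by
    ext u
    simp [closedNbhd, G.adj_comm]
  rw [this, card_insert_of_notMem (by simp), deg]

lemma le_quorumNumber {G : SimpleGraph V} {c : V → ℕ} (hc : IsQuorumColoring G c) :
    numClasses c ≤ quorumNumber G :=
  le_csSup ⟨Fintype.card V, by rintro _ ⟨c', -, rfl⟩; exact card_image_le.trans (by simp)⟩
    ⟨c, hc, rfl⟩

lemma isQuorumColoring_of_le {G H : SimpleGraph V} (hHG : H ≤ G)
    (hdeg : ∀ v, deg G v + 1 ≤ 2 * (deg H v + 1)) {c : V → ℕ}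
    (hc : ∀ u v, H.Adj u v → c u = c v) : IsQuorumColoring G c := by
  intro v
  have hsub : closedNbhd H v ⊆ {u ∈ closedNbhd G v | c u = c v} := by
    intro u hu
    simp only [closedNbhd, mem_filter, mem_univ, true_and] at hu ⊢
    rcases hu with rfl | huv
    · simp
    · exact ⟨Or.inr (hHG huv), hc u v huv⟩
  have := card_le_card hsub
  rw [card_closedNbhd] at this ⊢
  linarith [hdeg v]

noncomputable def componentColoring (H : SimpleGraph V) (v : V) : ℕ :=
  Finite.equivFin H.ConnectedComponent (H.connectedComponentMk v)

lemma componentColoring_eq_of_adj {H : SimpleGraph V} {u v : V} (h : H.Adj u v) :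
    componentColoring H u = componentColoring H v := by
  simp only [componentColoring, ConnectedComponent.sound h.reachable]

lemma numClasses_componentColoring (H : SimpleGraph V) :
    numClasses (componentColoring H) = Nat.card H.ConnectedComponent := by
  suffices univ.image (componentColoring H) = range (Nat.card H.ConnectedComponent) by
    rw [numClasses, this, card_range]
  ext m
  simp only [mem_image, mem_univ, true_and, mem_range, componentColoring]
  refine ⟨fun ⟨v, hv⟩ => hv ▸ Fin.is_lt _, fun hm => ?_⟩
  obtain ⟨v, hv⟩ := ((Finite.equivFin H.ConnectedComponent).symm ⟨m, hm⟩).exists_rep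
  exact ⟨v, by rw [show H.connectedComponentMk v = _ from hv]; simp⟩

lemma ncard_edgeSet_fromRel_add_ncard_le (S : V → Finset V) {M : Set (Sym2 V)}
    (hMS : ∀ a b, s(a, b) ∈ M → b ∈ S a) (hM : ∀ e ∈ M, ¬e.IsDiag) :
    (fromRel fun a b => b ∈ S a).edgeSet.ncard + M.ncard ≤ ∑ v, #(S v) := by
  let P : Finset (Σ _ : V, V) := univ.sigma S
  let f : (Σ _ : V, V) → Sym2 V := fun p => s(p.1, p.2)
  have hE : (fromRel fun a b => b ∈ S a).edgeSet ⊆ ↑(P.image f) := by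
    rintro ⟨a, b⟩ ⟨-, hab | hba⟩
    · exact mem_image.mpr ⟨⟨a, b⟩, by simp [P, hab], rfl⟩
    · exact mem_image.mpr ⟨⟨b, a⟩, by simp [P, hba], Sym2.eq_swap⟩
  have hfiber : ∀ e ∈ M.toFinset, 1 < #{p ∈ P | f p = e} := by
    rintro ⟨a, b⟩ he
    rw [Set.mem_toFinset] at he
    have hab : a ≠ b := fun h => hM _ he (by simp [h])
    refine one_lt_card.mpr ⟨⟨a, b⟩, ?_, ⟨b, a⟩, ?_, by simp [hab]⟩
    · simp [P, f, hMS a b he]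
    · simp [P, f, hMS b a (Sym2.eq_swap ▸ he)]
  calc _ ≤ #(P.image f) + #M.toFinset := by
        rw [Set.ncard_eq_toFinset_card' M]
        exact Nat.add_le_add_right ((Set.ncard_le_ncard hE (finite_toSet _)).trans
          (Set.ncard_coe_finset _).le) _
    _ ≤ #P := card_image_add_card_le_of_one_lt_card_fiber hfiber
    _ = ∑ v, #(S v) := card_sigma _ _

lemma exists_matched_subset_card_eq {G : SimpleGraph V} {M : G.Subgraph} (hM : M.IsMatching)
    (hL : ∀ v ∈ M.verts, deg G v ≠ 1) (v : V) :
    ∃ s : Finset V, ({w | M.Adj v w} : Finset V) ⊆ s ∧ s ⊆ ({w | G.Adj v w} : Finset V) ∧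
      #s = if deg G v ≠ 1 then deg G v / 2 else 0 := by
  have hsub : ({w | M.Adj v w} : Finset V) ⊆ ({w | G.Adj v w} : Finset V) := by
    intro w
    simpa using fun h => M.adj_sub h
  refine exists_subsuperset_card_eq hsub ?_ ?_
  · rcases ({w | M.Adj v w} : Finset V).eq_empty_or_nonempty with h | ⟨w, hw⟩
    · simp [h]
    have hvw : M.Adj v w := by simpa using hw
    have hdeg : 1 ≤ deg G v := card_pos.mpr ⟨w, by simpa using M.adj_sub hvw⟩
    have hmatched : #({w | M.Adj v w} : Finset V) ≤ 1 := card_le_one.mpr fun a ha b hb => by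
      simp only [mem_filter, mem_univ, true_and] at ha hb
      exact (hM (M.edge_vert hvw)).unique ha hb
    have hne : deg G v ≠ 1 := hL v (M.edge_vert hvw)
    rw [if_pos hne]
    omega
  · split_ifs
    · exact Nat.div_le_self _ _
    · exact Nat.zero_le _

theorem ncard_edgeSet_add_card_le_quorumNumber_add_sum (G : SimpleGraph V) {M : G.Subgraph}
    (hM : M.IsMatching) (hL : ∀ v ∈ M.verts, deg G v ≠ 1) :
    M.edgeSet.ncard + Fintype.card V ≤
      quorumNumber G + ∑ v ∈ univ.filter (fun v => deg G v ≠ 1), deg G v / 2 := by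
  choose S hMS hSG hScard using exists_matched_subset_card_eq hM hL
  let H : SimpleGraph V := fromRel fun a b => b ∈ S a
  have hHG : H ≤ G := by
    rintro a b ⟨-, hab | hba⟩
    · simpa using hSG a hab
    · simpa [G.adj_comm] using hSG b hba
  have hdeg : ∀ v, deg G v + 1 ≤ 2 * (deg H v + 1) := by
    intro v
    have hS : #(S v) ≤ deg H v := card_le_card fun w hw => by
      simpa [H, hw] using (G.ne_of_adj (by simpa using hSG v hw))
    have := hScard v
    split_ifs at this <;> omega
  have hcomponents : Nat.card H.ConnectedComponent ≤ quorumNumber G :=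
    numClasses_componentColoring H ▸ le_quorumNumber
      (isQuorumColoring_of_le hHG hdeg fun _ _ h => componentColoring_eq_of_adj h)
  have hforest := card_le_card_connectedComponent_add_ncard_edgeSet H
  have hedges : H.edgeSet.ncard + M.edgeSet.ncard ≤ ∑ v, #(S v) :=
    ncard_edgeSet_fromRel_add_ncard_le S (fun a b h => by simpa using hMS a (by simpa using h))
      fun e he => G.not_isDiag_of_mem_edgeSet (M.edgeSet_subset he)
  have hsum : ∑ v, #(S v) = ∑ v ∈ univ.filter (fun v => deg G v ≠ 1), deg G v / 2 := by
    rw [sum_filter]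
    exact sum_congr rfl fun v _ => hScard v
  rw [Nat.card_eq_fintype_card] at hforest
  omega

end Quorum

lemma exists_isMatching_ncard_edgeSet_eq_matchingNumber {W : Type*} [Finite W]
    (H : SimpleGraph W) : ∃ M : H.Subgraph, M.IsMatching ∧ M.edgeSet.ncard = matchingNumber H :=
  Nat.sSup_mem (s := {k | ∃ M : H.Subgraph, M.IsMatching ∧ M.edgeSet.ncard = k})
    ⟨0, ⊥, fun _ hv => hv.elim, by simp⟩
    ⟨Nat.card (Sym2 W), by rintro _ ⟨M, -, rfl⟩; exact Set.ncard_le_card _⟩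

end SimpleGraph

theorem quorumNumber_tree_lower_bound_general {V : Type*} [Fintype V] (G : SimpleGraph V) :
    matchingNumber (G.induce {v : V | deg G v ≠ 1}) + Fintype.card V -
        ∑ v ∈ Finset.univ.filter (fun v => deg G v ≠ 1), deg G v / 2 ≤
      quorumNumber G := by
  obtain ⟨M, hM, hcard⟩ :=
    exists_isMatching_ncard_edgeSet_eq_matchingNumber (G.induce {v | deg G v ≠ 1})
  let ι := Embedding.induce (G := G) {v | deg G v ≠ 1}
  have hbound := ncard_edgeSet_add_card_le_quorumNumber_add_sum G (hM.map ι.toHom ι.injective)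
    (by rintro _ ⟨v, -, rfl⟩; exact v.2)
  rw [Subgraph.edgeSet_map, Set.ncard_image_of_injective _
    (Sym2.map.injective (f := ι.toHom) ι.injective), hcard] at hbound
  omega

/-- lower bound on `ψ_q` of a nontrivial tree:
`ψ_q(T) ≥ μ(T[V \ L]) + n − Σ_{v ∈ V \ L} ⌊d_T(v)/2⌋`. -/
theorem quorumNumber_tree_lower_bound {V : Type*} [Fintype V] (G : SimpleGraph V)
    (hT : G.IsTree) (hn : 1 < Fintype.card V) :
    matchingNumber (G.induce {v : V | deg G v ≠ 1}) + Fintype.card V -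
        ∑ v ∈ Finset.univ.filter (fun v => deg G v ≠ 1), deg G v / 2 ≤
      quorumNumber G :=
  quorumNumber_tree_lower_bound_general G
end
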